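/- arXiv:2507.20079 — 6 statements merged into one kernel-verified Lean document; each statement's English description precedes it below -/
import Mathlib

section
/- Let R_n, R : ℝ^p → ℝ be differentiable functions, let β* ∈ ℝ^p with ∇R(β*) = 0, let C = {β : ‖β − β*‖₂ ≤ η} for some η > 0, and suppose R is μ-strongly convex on C for some μ > 0 (i.e., R(β') ≥ R(β) + ∇R(β)ᵀ(β' − β) + (μ/2)‖β' − β‖₂² for all β, β' ∈ C). Let λ_ε > 0 and λ_* ≥ 0 be such that for all β ∈ C: |{∇R_n(β) − ∇R(β)}ᵀ(β − β*)| ≤ λ_ε‖β − β*‖₁ + (μ/2)‖β − β*‖₂² + λ_*. Let λ > λ_ε and set λ_− = λ − λ_ε and λ_+ = λ + λ_ε + λ_−/2. Then every stationary point β̂ of β ↦ R_n(β) + λ‖β‖₁ that is contained in C satisfies ‖β̂ − β*‖₁ ≤ 2( (λ_+²/(2μ λ_−)) s + λ_*/λ_− ), where s = #{j : β*_j ≠ 0}. -/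
open MeasureTheory
open scoped RealInnerProductSpace

lemma real_sign_mul_self (x : ℝ) : Real.sign x * x = |x| := by
  rcases lt_trichotomy x 0 with h|h|h
  · rw [Real.sign_of_neg h, abs_of_neg h]; ring
  · simp [h]
  · rw [Real.sign_of_pos h, abs_of_pos h]; ring

/-- simplified version of Theorem 2.1 in Elsener–van de Geer:
deterministic ℓ1-error bound for stationary points of the ℓ1-penalized empirical risk,
under local strong convexity of the population risk and a uniform bound on the
empirical-process term. -/
theorem l1_bound_for_stationary_points {p : ℕ}
    (Rn R : EuclideanSpace ℝ (Fin p) → ℝ)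
    (hRn : Differentiable ℝ Rn) (hR : Differentiable ℝ R)
    (βstar : EuclideanSpace ℝ (Fin p)) (hgradstar : gradient R βstar = 0)
    (η : ℝ) (hη : 0 < η) (μ : ℝ) (hμ : 0 < μ)
    -- `R` is `μ`-strongly convex on `C = {β : ‖β − β*‖₂ ≤ η}`
    (hSC : ∀ β ∈ Metric.closedBall βstar η, ∀ β' ∈ Metric.closedBall βstar η,
      R β + ⟪gradient R β, β' - β⟫ + μ / 2 * ‖β' - β‖ ^ 2 ≤ R β')
    (lamEps lamStar : ℝ) (hlamEps : 0 < lamEps) (hlamStar : 0 ≤ lamStar)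
    -- empirical process bound on `C`
    (hemp : ∀ β ∈ Metric.closedBall βstar η,
      |⟪gradient Rn β - gradient R β, β - βstar⟫| ≤
        lamEps * (∑ j, |β j - βstar j|) + μ / 2 * ‖β - βstar‖ ^ 2 + lamStar)
    (lam : ℝ) (hlam : lamEps < lam)
    (βhat : EuclideanSpace ℝ (Fin p)) (hβhat : βhat ∈ Metric.closedBall βstar η)
    -- `β̂` is a stationary point of `β ↦ Rn(β) + lam ‖β‖₁`
    (hstat : ∃ z : EuclideanSpace ℝ (Fin p), (∀ j, |z j| ≤ 1) ∧
      (∀ j, βhat j ≠ 0 → z j = Real.sign (βhat j)) ∧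
      gradient Rn βhat + lam • z = 0) :
    ∑ j, |βhat j - βstar j| ≤
      2 * ((lam + lamEps + (lam - lamEps) / 2) ^ 2 / (2 * μ * (lam - lamEps)) *
          (({j | βstar j ≠ 0} : Set (Fin p)).ncard : ℝ) +
        lamStar / (lam - lamEps)) := by
  obtain ⟨z, hz1, hzsign, hzeq⟩ := hstat
  set d : Fin p → ℝ := fun j => βhat j - βstar j with hd
  set S : Finset (Fin p) := Finset.univ.filter (fun j => βstar j ≠ 0) with hS
  set a : ℝ := ∑ j ∈ S, |d j| with ha
  set b : ℝ := ∑ j ∈ Finset.univ.filter (fun j => ¬ βstar j ≠ 0), |d j| with hb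
  set N : ℝ := ‖βhat - βstar‖ with hN
  have hNnn : 0 ≤ N := norm_nonneg _
  set lamM : ℝ := lam - lamEps with hlamM
  set lamP : ℝ := lam + lamEps + (lam - lamEps) / 2 with hlamP
  have hlamMpos : 0 < lamM := by simp [hlamM]; linarith
  have hlamPpos : 0 < lamP := by simp [hlamP]; linarith
  -- basic coordinate facts
  have hT : (∑ j, |βhat j - βstar j|) = a + b := by
    rw [ha, hb, Finset.sum_filter_add_sum_filter_not]
  have hanonneg : 0 ≤ a := Finset.sum_nonneg fun j _ => abs_nonneg _
  have hbnonneg : 0 ≤ b := Finset.sum_nonneg fun j _ => abs_nonneg _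
  -- the squared norm as a sum
  have hN2 : N ^ 2 = ∑ j, d j ^ 2 := by
    rw [hN, ← real_inner_self_eq_norm_sq]
    simp only [PiLp.inner_apply, RCLike.inner_apply, conj_trivial, sq, hd, PiLp.sub_apply]
  -- inner product with z
  have hzd : b - a ≤ ∑ j, z j * d j := by
    rw [← Finset.sum_filter_add_sum_filter_not Finset.univ (fun j => βstar j ≠ 0)
      (fun j => z j * d j)]
    have h1 : ∑ j ∈ S, (-|d j|) ≤ ∑ j ∈ S, z j * d j := by
      apply Finset.sum_le_sum
      intro j _
      have := neg_abs_le (z j * d j)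
      have h2 : |z j * d j| ≤ |d j| := by
        rw [abs_mul]
        calc |z j| * |d j| ≤ 1 * |d j| :=
          mul_le_mul_of_nonneg_right (hz1 j) (abs_nonneg _)
        _ = |d j| := one_mul _
      linarith
    have h2 : ∑ j ∈ Finset.univ.filter (fun j => ¬ βstar j ≠ 0), z j * d j = b := by
      rw [hb]
      apply Finset.sum_congr rfl
      intro j hj
      simp only [Finset.mem_filter, not_not] at hj
      have hdj : d j = βhat j := by simp [hd, hj.2]
      by_cases h0 : βhat j = 0
      · simp [hdj, h0]
      · rw [hdj, hzsign j h0, real_sign_mul_self]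
    rw [h2]
    simp only [Finset.sum_neg_distrib] at h1
    linarith [h1]
  -- strong convexity gives μ N² ≤ ⟪∇R β̂, β̂ - β*⟫
  have hmemstar : βstar ∈ Metric.closedBall βstar η := Metric.mem_closedBall_self hη.le
  have hsc1 := hSC βhat hβhat βstar hmemstar
  have hsc2 := hSC βstar hmemstar βhat hβhat
  rw [hgradstar, inner_zero_left] at hsc2
  have hrev : βstar - βhat = -(βhat - βstar) := by abel
  rw [hrev, inner_neg_right, norm_neg] at hsc1
  have hSCcomb : μ * N ^ 2 ≤ ⟪gradient R βhat, βhat - βstar⟫ := by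
    rw [hN]; nlinarith [hsc1, hsc2]
  -- stationarity: ⟪∇Rn β̂, β̂ - β*⟫ = -lam * ∑ z j * d j
  have hgradn : gradient Rn βhat = -(lam • z) := eq_neg_of_add_eq_zero_left hzeq
  have hzΔ : ⟪z, βhat - βstar⟫ = ∑ j, z j * d j := by
    simp [PiLp.inner_apply, RCLike.inner_apply, conj_trivial, hd]
    exact Finset.sum_congr rfl (fun _ _ => mul_comm _ _)
  have hinnern : ⟪gradient Rn βhat, βhat - βstar⟫ = -(lam * ∑ j, z j * d j) := by
    rw [hgradn, inner_neg_left, real_inner_smul_left, hzΔ]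
  -- empirical process bound
  have hempb := hemp βhat hβhat
  rw [inner_sub_left] at hempb
  rw [hT] at hempb
  have hempb' : ⟪gradient R βhat, βhat - βstar⟫ ≤ ⟪gradient Rn βhat, βhat - βstar⟫ +
      (lamEps * (a + b) + μ / 2 * N ^ 2 + lamStar) := by
    have h := (abs_le.mp hempb).1
    simp only [← hN] at h
    linarith [h]
  -- basic inequality (*)
  have hstar : μ / 2 * N ^ 2 + lamM * b ≤ (lam + lamEps) * a + lamStar := by
    have h1 : μ * N ^ 2 ≤ -(lam * ∑ j, z j * d j) + (lamEps * (a + b) + μ / 2 * N ^ 2 + lamStar) := by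
      rw [← hinnern]
      linarith [hSCcomb, hempb']
    have h2 : -(lam * ∑ j, z j * d j) ≤ lam * a - lam * b := by
      have := mul_le_mul_of_nonneg_left hzd (by linarith : (0:ℝ) ≤ lam)
      linarith
    simp only [hlamM]
    linarith [h1, h2]
  -- Cauchy–Schwarz: a² ≤ |S| * N²
  set sc : ℝ := (S.card : ℝ) with hsc
  have hscnn : 0 ≤ sc := Nat.cast_nonneg _
  have hCS : a ^ 2 ≤ sc * N ^ 2 := by
    have h1 : a ^ 2 ≤ sc * ∑ j ∈ S, d j ^ 2 := by
      have h := sq_sum_le_card_mul_sum_sq (s := S) (f := fun j => |d j|)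
      simp only [sq_abs] at h
      rw [ha]
      exact_mod_cast h
    have h2 : ∑ j ∈ S, d j ^ 2 ≤ ∑ j, d j ^ 2 :=
      Finset.sum_le_sum_of_subset_of_nonneg (Finset.subset_univ S)
        (fun j _ _ => sq_nonneg _)
    rw [hN2]
    have h3 := mul_le_mul_of_nonneg_left h2 hscnn
    linarith [h1, h3]
  -- a ≤ √sc * N
  set r : ℝ := Real.sqrt sc with hr
  have hrnn : 0 ≤ r := Real.sqrt_nonneg _
  have hr2 : r ^ 2 = sc := Real.sq_sqrt hscnn
  have haleq : a ≤ r * N := by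
    have h : a ^ 2 ≤ (r * N) ^ 2 := by rw [mul_pow, hr2]; exact hCS
    exact (pow_le_pow_iff_left₀ hanonneg (mul_nonneg hrnn hNnn) two_ne_zero).mp h
  clear_value d S a b N lamM lamP sc r
  -- AM–GM step
  have hAG : lamP * (r * N) ≤ lamP ^ 2 * sc / (2 * μ) + μ / 2 * N ^ 2 := by
    have h := sq_nonneg (lamP * r - μ * N)
    have h3 : lamP ^ 2 * sc / (2 * μ) + μ / 2 * N ^ 2 =
        (lamP ^ 2 * sc + μ ^ 2 * N ^ 2) / (2 * μ) := by
      field_simp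
    rw [h3, le_div_iff₀ (by linarith : (0:ℝ) < 2 * μ), ← hr2]
    linarith [h]
  -- combine
  have hPa : lamP * a ≤ lamP * (r * N) :=
    mul_le_mul_of_nonneg_left haleq hlamPpos.le
  have hkey : lamM * (a + b) ≤ lamP ^ 2 * sc / μ + 2 * lamStar := by
    have hlp : lam + lamEps = lamP - lamM / 2 := by rw [hlamP, hlamM]; ring
    rw [hlp] at hstar
    have hdiv : lamP ^ 2 * sc / (2 * μ) * 2 = lamP ^ 2 * sc / μ := by
      field_simp
    have h5 : lamM * b + lamM / 2 * a ≤ lamP ^ 2 * sc / (2 * μ) + lamStar := by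
      linarith [hstar, hPa, hAG]
    linarith [h5, hdiv, mul_nonneg hlamMpos.le hbnonneg]
  -- rewrite the cardinality
  have hcard : (({j | βstar j ≠ 0} : Set (Fin p)).ncard : ℝ) = sc := by
    rw [hsc]
    congr 1
    rw [show ({j | βstar j ≠ 0} : Set (Fin p)) = (S : Set (Fin p)) by ext j; simp [hS]]
    exact Set.ncard_coe_finset S
  rw [hT, hcard]
  rw [show 2 * (lamP ^ 2 / (2 * μ * lamM) * sc + lamStar / lamM) =
      (lamP ^ 2 * sc / μ + 2 * lamStar) / lamM by field_simp]
  rw [le_div_iff₀ hlamMpos]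
  linarith [hkey]
end

section
/- Let a, b > 0 and let Y ~ Beta(a, b). Set C̃ = (Γ(a+b)/(Γ(a)Γ(b))) · max{(1 − e^{−1})^{b−1}, 1}. Then for every t ≥ 1, P(−log Y ≥ t) ≤ (C̃ / a) · e^{−a t}. -/
open MeasureTheory

/-- The Beta distribution `Beta(a, b)` on `(0,1)`, with density
`x ↦ x^(a-1) (1-x)^(b-1) · Γ(a+b)/(Γ(a)Γ(b))`. -/
noncomputable def betaMeasure (a b : ℝ) : Measure ℝ :=
  volume.withDensity fun x =>
    ENNReal.ofReal
      (Set.indicator (Set.Ioo (0 : ℝ) 1)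
        (fun y => Real.Gamma (a + b) / (Real.Gamma a * Real.Gamma b) *
          y ^ (a - 1) * (1 - y) ^ (b - 1)) x)

/-- tail bound for `−log Y` when `Y ~ Beta(a, b)`:
`P(−log Y ≥ t) ≤ (C̃ / a) e^{−a t}` for all `t ≥ 1`, where
`C̃ = (Γ(a+b)/(Γ(a)Γ(b))) · max{(1 − e^{−1})^{b−1}, 1}`. -/
theorem neg_log_beta_tail_bound {Ω : Type*} [MeasurableSpace Ω]
    (ℙ : Measure Ω) [IsProbabilityMeasure ℙ]
    (a b : ℝ) (ha : 0 < a) (hb : 0 < b) (Y : Ω → ℝ)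
    (hY : Measure.map Y ℙ = betaMeasure a b) (t : ℝ) (ht : 1 ≤ t) :
    ℙ {ω | t ≤ -Real.log (Y ω)} ≤
      ENNReal.ofReal
        ((Real.Gamma (a + b) / (Real.Gamma a * Real.Gamma b) *
            max ((1 - Real.exp (-1)) ^ (b - 1)) 1 / a) * Real.exp (-a * t)) := by
  set C : ℝ := Real.Gamma (a + b) / (Real.Gamma a * Real.Gamma b) with hCdef
  set M : ℝ := max ((1 - Real.exp (-1)) ^ (b - 1)) 1 with hMdef
  set g : ℝ → ℝ := fun y => C * y ^ (a - 1) * (1 - y) ^ (b - 1) with hgdef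
  set r : ℝ := Real.exp (-t) with hrdef
  have hC : 0 < C := div_pos (Real.Gamma_pos_of_pos (by linarith))
    (mul_pos (Real.Gamma_pos_of_pos ha) (Real.Gamma_pos_of_pos hb))
  have hM1 : (1 : ℝ) ≤ M := le_max_right _ _
  have hr0 : 0 < r := Real.exp_pos _
  have hre : r ≤ Real.exp (-1) := Real.exp_le_exp.mpr (by linarith)
  have he1 : Real.exp (-1) < 1 := Real.exp_lt_one_iff.mpr (by norm_num)
  have hr1 : r < 1 := lt_of_le_of_lt hre he1
  -- measurability of the density
  have hgmeas : Measurable g := by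
    unfold g
    fun_prop
  have hfmeas : Measurable fun x => ENNReal.ofReal ((Set.Ioo (0:ℝ) 1).indicator g x) :=
    (hgmeas.indicator measurableSet_Ioo).ennreal_ofReal
  -- Y is a.e. measurable
  have hYae : AEMeasurable Y ℙ := by
    by_contra h
    have h0 : betaMeasure a b = 0 := by
      rw [← hY, Measure.map_of_not_aemeasurable h]
    have hpos : 0 < betaMeasure a b Set.univ := by
      rw [betaMeasure, withDensity_apply _ MeasurableSet.univ, Measure.restrict_univ]
      rw [lintegral_pos_iff_support hfmeas]
      have hsub : Set.Ioo (0:ℝ) 1 ⊆ Function.support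
          (fun x => ENNReal.ofReal ((Set.Ioo (0:ℝ) 1).indicator g x)) := by
        intro x hx
        have hgx : 0 < g x := by
          apply mul_pos (mul_pos hC (Real.rpow_pos_of_pos hx.1 _))
          exact Real.rpow_pos_of_pos (by linarith [hx.2]) _
        simp only [Function.mem_support, Set.indicator_of_mem hx]
        simp [ENNReal.ofReal_eq_zero, not_le, hgx]
      calc (0:ENNReal) < volume (Set.Ioo (0:ℝ) 1) := by simp
        _ ≤ _ := measure_mono hsub
    rw [h0] at hpos
    simp at hpos
  -- the tail set
  set S : Set ℝ := {y : ℝ | t ≤ -Real.log y} with hSdef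
  have hSmeas : MeasurableSet S :=
    measurableSet_le measurable_const Real.measurable_log.neg
  have hpre : {ω | t ≤ -Real.log (Y ω)} = Y ⁻¹' S := rfl
  rw [hpre, ← Measure.map_apply_of_aemeasurable hYae hSmeas, hY]
  rw [betaMeasure, withDensity_apply _ hSmeas]
  -- pointwise bound by indicator of Ioc 0 r
  have hbound : ∀ x : ℝ, S.indicator
      (fun x => ENNReal.ofReal ((Set.Ioo (0:ℝ) 1).indicator g x)) x ≤
      (Set.Ioc (0:ℝ) r).indicator (fun x => ENNReal.ofReal (C * M * x ^ (a - 1))) x := by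
    intro x
    by_cases hxS : x ∈ S
    · rw [Set.indicator_of_mem hxS]
      by_cases hxI : x ∈ Set.Ioo (0:ℝ) 1
      · rw [Set.indicator_of_mem hxI]
        have hxr : x ≤ r := by
          have hlog : Real.log x ≤ -t := by
            have := hxS; simp only [hSdef, Set.mem_setOf_eq] at this; linarith
          calc x = Real.exp (Real.log x) := (Real.exp_log hxI.1).symm
            _ ≤ Real.exp (-t) := Real.exp_le_exp.mpr hlog
        have hxIoc : x ∈ Set.Ioc (0:ℝ) r := ⟨hxI.1, hxr⟩
        rw [Set.indicator_of_mem hxIoc]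
        apply ENNReal.ofReal_le_ofReal
        have hfac : (1 - x) ^ (b - 1) ≤ M := by
          have hx1 : 1 - Real.exp (-1) ≤ 1 - x := by
            have : x ≤ Real.exp (-1) := le_trans hxr hre
            linarith
          have hxe : 0 < 1 - Real.exp (-1) := by linarith
          rcases le_or_gt 1 b with hb1 | hb1
          · exact le_trans (Real.rpow_le_one (by linarith [hxI.2]) (by linarith [hxI.1])
              (by linarith)) hM1
          · exact le_trans (Real.rpow_le_rpow_of_nonpos hxe hx1 (by linarith))
              (le_max_left _ _)
        calc C * x ^ (a - 1) * (1 - x) ^ (b - 1)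
            ≤ C * x ^ (a - 1) * M := by
              apply mul_le_mul_of_nonneg_left hfac
              exact le_of_lt (mul_pos hC (Real.rpow_pos_of_pos hxI.1 _))
          _ = C * M * x ^ (a - 1) := by ring
      · rw [Set.indicator_of_notMem hxI]; simp
    · rw [Set.indicator_of_notMem hxS]; exact zero_le
  calc ∫⁻ x in S, ENNReal.ofReal ((Set.Ioo (0:ℝ) 1).indicator g x)
      = ∫⁻ x, S.indicator (fun x => ENNReal.ofReal ((Set.Ioo (0:ℝ) 1).indicator g x)) x :=
        (lintegral_indicator hSmeas _).symm
    _ ≤ ∫⁻ x, (Set.Ioc (0:ℝ) r).indicator (fun x => ENNReal.ofReal (C * M * x ^ (a - 1))) x :=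
        lintegral_mono hbound
    _ = ∫⁻ x in Set.Ioc (0:ℝ) r, ENNReal.ofReal (C * M * x ^ (a - 1)) :=
        lintegral_indicator measurableSet_Ioc _
    _ = ENNReal.ofReal (∫ x in Set.Ioc (0:ℝ) r, C * M * x ^ (a - 1)) := by
        rw [MeasureTheory.ofReal_integral_eq_lintegral_ofReal]
        · have : IntegrableOn (fun x : ℝ => x ^ (a - 1)) (Set.Ioc 0 r) volume := by
            rw [← intervalIntegrable_iff_integrableOn_Ioc_of_le hr0.le]
            exact intervalIntegral.intervalIntegrable_rpow' (by linarith)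
          exact (this.const_mul (C * M))
        · filter_upwards [ae_restrict_mem measurableSet_Ioc] with x hx
          have : (0:ℝ) ≤ x ^ (a - 1) := (Real.rpow_pos_of_pos hx.1 _).le
          positivity
    _ = ENNReal.ofReal (C * M / a * Real.exp (-a * t)) := by
        congr 1
        rw [← intervalIntegral.integral_of_le hr0.le]
        rw [intervalIntegral.integral_const_mul, integral_rpow (Or.inl (by linarith))]
        have h0a : (0:ℝ) ^ (a - 1 + 1) = 0 := by
          rw [show a - 1 + 1 = a by ring]; exact Real.zero_rpow ha.ne'
        have hra : r ^ (a - 1 + 1) = Real.exp (-a * t) := by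
          rw [show a - 1 + 1 = a by ring, hrdef, ← Real.exp_mul]
          ring_nf
        rw [h0a, hra]
        field_simp
        rw [show a - 1 + 1 = a by ring, sub_zero, mul_div_cancel_left₀ _ ha.ne']
end

section
/- Let a, b > 0 and let Y ~ Beta(a, b). Set C̃' = (Γ(a+b)/(Γ(a)Γ(b))) · max{(1 − e^{−1})^{a−1}, 1}. Then for every t ≥ 1, P(−log(1 − Y) ≥ t) ≤ (C̃' / b) · e^{−b t}. -/
open MeasureTheory

/-- tail bound for `−log(1 − Y)` when `Y ~ Beta(a, b)`:
`P(−log(1 − Y) ≥ t) ≤ (C̃' / b) e^{−b t}` for all `t ≥ 1`, where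
`C̃' = (Γ(a+b)/(Γ(a)Γ(b))) · max{(1 − e^{−1})^{a−1}, 1}`. -/
theorem neg_log_one_sub_beta_tail_bound {Ω : Type*} [MeasurableSpace Ω]
    (ℙ : Measure Ω) [IsProbabilityMeasure ℙ]
    (a b : ℝ) (ha : 0 < a) (hb : 0 < b) (Y : Ω → ℝ)
    (hY : Measure.map Y ℙ = betaMeasure a b) (t : ℝ) (ht : 1 ≤ t) :
    ℙ {ω | t ≤ -Real.log (1 - Y ω)} ≤
      ENNReal.ofReal
        ((Real.Gamma (a + b) / (Real.Gamma a * Real.Gamma b) *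
            max ((1 - Real.exp (-1)) ^ (a - 1)) 1 / b) * Real.exp (-b * t)) := by
  set C := Real.Gamma (a + b) / (Real.Gamma a * Real.Gamma b) with hCdef
  set M := max ((1 - Real.exp (-1)) ^ (a - 1)) 1 with hMdef
  set g : ℝ → ℝ := fun y => C * y ^ (a - 1) * (1 - y) ^ (b - 1) with hgdef
  have hC : 0 < C :=
    div_pos (Real.Gamma_pos_of_pos (by linarith))
      (mul_pos (Real.Gamma_pos_of_pos ha) (Real.Gamma_pos_of_pos hb))
  have hM : (0:ℝ) < M := lt_of_lt_of_le one_pos (le_max_right _ _)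
  have he1 : Real.exp (-1) < 1 := Real.exp_lt_one_iff.mpr (by norm_num)
  have he1' : (0:ℝ) < 1 - Real.exp (-1) := by linarith
  set c := 1 - Real.exp (-t) with hcdef
  have het : Real.exp (-t) ≤ Real.exp (-1) := Real.exp_le_exp.mpr (by linarith)
  have het0 : 0 < Real.exp (-t) := Real.exp_pos _
  have hc0 : 0 < c := by simp only [hcdef]; linarith
  have hc1 : c < 1 := by simp only [hcdef]; linarith
  -- measurability of density
  have hgm : Measurable g := by
    simp only [hgdef]
    fun_prop
  have hdm : Measurable fun x => ENNReal.ofReal ((Set.Ioo (0:ℝ) 1).indicator g x) :=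
    (hgm.indicator measurableSet_Ioo).ennreal_ofReal
  -- Y is a.e.-measurable
  have hYm : AEMeasurable Y ℙ := by
    by_contra h
    rw [Measure.map_of_not_aemeasurable h] at hY
    have h0 : betaMeasure a b (Set.Ioo (0:ℝ) 1) = 0 := by rw [← hY]; simp
    rw [betaMeasure, withDensity_apply _ measurableSet_Ioo] at h0
    rw [lintegral_eq_zero_iff hdm, Filter.EventuallyEq,
      ae_restrict_iff' measurableSet_Ioo] at h0
    have hnull : volume (Set.Ioo (0:ℝ) 1) = 0 := by
      refine measure_mono_null ?_ h0
      intro x hx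
      simp only [Set.mem_compl_iff, Set.mem_setOf_eq, ae_iff]
      intro hcontra
      have := hcontra hx
      rw [Set.indicator_of_mem hx] at this
      have hpos : 0 < g x := by
        refine mul_pos (mul_pos hC (Real.rpow_pos_of_pos hx.1 _)) ?_
        exact Real.rpow_pos_of_pos (by linarith [hx.2]) _
      simp only [Pi.zero_apply, ENNReal.ofReal_eq_zero] at this
      linarith
    simp [Real.volume_Ioo] at hnull
  -- reduce to a beta-measure computation
  have hSmf : Measurable fun y : ℝ => -Real.log (1 - y) :=
    ((Real.measurable_log.comp (measurable_const.sub measurable_id)).neg)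
  have hSm : MeasurableSet {y : ℝ | t ≤ -Real.log (1 - y)} :=
    measurableSet_le measurable_const hSmf
  have hmap : ℙ {ω | t ≤ -Real.log (1 - Y ω)}
      = betaMeasure a b {y | t ≤ -Real.log (1 - y)} := by
    rw [← hY, Measure.map_apply_of_aemeasurable hYm hSm]
    rfl
  rw [hmap, betaMeasure, withDensity_apply _ hSm]
  set S := {y : ℝ | t ≤ -Real.log (1 - y)} with hSdef
  -- key pointwise facts on S ∩ Ioo 0 1
  have hkey : ∀ x ∈ Set.Ioo (0:ℝ) 1 ∩ S, c ≤ x ∧ g x ≤ C * M * (1 - x) ^ (b - 1) := by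
    rintro x ⟨hx, hxS⟩
    have hx1 : 0 < 1 - x := by linarith [hx.2]
    have hlog : Real.log (1 - x) ≤ -t := by
      have := hxS; simp only [hSdef, Set.mem_setOf_eq] at this; linarith
    have hle : 1 - x ≤ Real.exp (-t) := by
      calc 1 - x = Real.exp (Real.log (1 - x)) := (Real.exp_log hx1).symm
        _ ≤ Real.exp (-t) := Real.exp_le_exp.mpr hlog
    have hcx : c ≤ x := by simp only [hcdef]; linarith
    refine ⟨hcx, ?_⟩
    have hxM : x ^ (a - 1) ≤ M := by
      rcases le_or_gt 1 a with hA | hA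
      · exact le_trans (Real.rpow_le_one hx.1.le hx.2.le (by linarith)) (le_max_right _ _)
      · refine le_trans ?_ (le_max_left _ _)
        refine Real.rpow_le_rpow_of_nonpos he1' ?_ (by linarith)
        linarith
    have : C * x ^ (a - 1) ≤ C * M := by
      exact mul_le_mul_of_nonneg_left hxM hC.le
    exact mul_le_mul_of_nonneg_right this (Real.rpow_nonneg hx1.le _)
  calc ∫⁻ x in S, ENNReal.ofReal ((Set.Ioo (0:ℝ) 1).indicator g x)
      = ∫⁻ x in S, (Set.Ioo (0:ℝ) 1).indicator (fun y => ENNReal.ofReal (g y)) x := by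
        refine lintegral_congr fun x => ?_
        by_cases hx : x ∈ Set.Ioo (0:ℝ) 1 <;> simp [hx]
    _ = ∫⁻ x in Set.Ioo (0:ℝ) 1 ∩ S, ENNReal.ofReal (g x) := by
        rw [lintegral_indicator measurableSet_Ioo, Measure.restrict_restrict measurableSet_Ioo]
    _ ≤ ∫⁻ x in Set.Ioo (0:ℝ) 1 ∩ S, ENNReal.ofReal (C * M * (1 - x) ^ (b - 1)) := by
        refine setLIntegral_mono ?_ fun x hx => ?_
        · exact Measurable.ennreal_ofReal (by fun_prop)
        · exact ENNReal.ofReal_le_ofReal (hkey x hx).2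
    _ ≤ ∫⁻ x in Set.Icc c 1, ENNReal.ofReal (C * M * (1 - x) ^ (b - 1)) := by
        refine lintegral_mono_set fun x hx => ?_
        exact ⟨(hkey x hx).1, le_of_lt hx.1.2⟩
    _ = ENNReal.ofReal (∫ x in Set.Icc c 1, C * M * (1 - x) ^ (b - 1)) := by
        refine (ofReal_integral_eq_lintegral_ofReal ?_ ?_).symm
        · show IntegrableOn _ _ _
          rw [← intervalIntegrable_iff_integrableOn_Icc_of_le hc1.le]
          have : IntervalIntegrable (fun x : ℝ => x ^ (b - 1)) volume (1 - 1) (1 - c) :=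
            intervalIntegral.intervalIntegrable_rpow' (by linarith)
          have h2 : IntervalIntegrable (fun x : ℝ => (1 - x) ^ (b - 1)) volume c 1 := by
            have := this.comp_sub_left 1
            simpa using this.symm
          exact h2.const_mul _
        · refine (ae_restrict_iff' measurableSet_Icc).mpr (Filter.Eventually.of_forall
            fun x hx => mul_nonneg (mul_nonneg hC.le hM.le)
              (Real.rpow_nonneg (by linarith [hx.2]) _))
    _ ≤ ENNReal.ofReal (C * M / b * Real.exp (-b * t)) := by
        apply ENNReal.ofReal_le_ofReal
        rw [integral_Icc_eq_integral_Ioc, ← intervalIntegral.integral_of_le hc1.le]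
        rw [intervalIntegral.integral_const_mul]
        have hcs : ∫ x in c..1, (1 - x) ^ (b - 1) = ∫ x in (1-1:ℝ)..(1-c), x ^ (b - 1) :=
          intervalIntegral.integral_comp_sub_left (fun x : ℝ => x ^ (b - 1)) 1
        rw [hcs]
        have h0 : (1:ℝ) - 1 = 0 := by ring
        have h1 : (1:ℝ) - c = Real.exp (-t) := by simp [hcdef]
        rw [h0, h1, integral_rpow (Or.inl (by linarith))]
        have hbb : b - 1 + 1 = b := by ring
        rw [hbb, Real.zero_rpow hb.ne']
        have hexp : Real.exp (-t) ^ b = Real.exp (-b * t) := by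
          rw [Real.rpow_def_of_pos het0, Real.log_exp]; ring_nf
        rw [hexp, sub_zero]
        apply le_of_eq
        ring
end

section
/- Let a, b > 0 and let Y ~ Beta(a, b). Set C̃ = (Γ(a+b)/(Γ(a)Γ(b))) · max{(1 − e^{−1})^{b−1}, 1}. Then E[(log Y)²] ≤ 1 + 2 C̃ / a³. -/
open MeasureTheory

open Set Real
open scoped ENNReal

section aux
lemma image_exp_neg : (fun t : ℝ => Real.exp (-t)) '' (Set.Ioi 0) = Set.Ioo 0 1 := by
  ext x
  constructor
  · rintro ⟨t, ht, rfl⟩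
    exact ⟨Real.exp_pos _, Real.exp_lt_one_iff.mpr (by simpa using ht)⟩
  · rintro ⟨hx0, hx1⟩
    exact ⟨-Real.log x, by simpa using Real.log_neg hx0 hx1, by simp [Real.exp_log hx0]⟩

lemma deriv_exp_neg (t : ℝ) : HasDerivAt (fun t : ℝ => Real.exp (-t)) (-Real.exp (-t)) t := by
  simpa using (hasDerivAt_neg t).exp

lemma inj_exp_neg : Set.InjOn (fun t : ℝ => Real.exp (-t)) (Set.Ioi 0) :=
  (Real.exp_injective.comp neg_injective).injOn

lemma key_integrand (a : ℝ) (t : ℝ) (_ht : t ∈ Set.Ioi (0:ℝ)) :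
    |(-Real.exp (-t))| • (Real.exp (-t) ^ (a-1) * (Real.log (Real.exp (-t)))^2)
      = t ^ ((3:ℝ)-1) * Real.exp (-(a * t)) := by
  rw [abs_neg, abs_of_pos (Real.exp_pos _), Real.log_exp, smul_eq_mul,
    Real.rpow_def_of_pos (Real.exp_pos _), Real.log_exp]
  rw [show ((3:ℝ)-1) = ((2:ℕ):ℝ) by norm_num, Real.rpow_natCast]
  have h1 : rexp (-t) * rexp (-t*(a-1)) = rexp (-(a*t)) := by
    rw [← Real.exp_add]; congr 1; ring
  calc rexp (-t) * (rexp (-t * (a - 1)) * (-t) ^ 2)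
      = (rexp (-t) * rexp (-t*(a-1))) * t^2 := by ring
    _ = t ^ 2 * rexp (-(a * t)) := by rw [h1]; ring

lemma key_integrable {a : ℝ} (ha : 0 < a) :
    IntegrableOn (fun x : ℝ => x ^ (a-1) * (Real.log x)^2) (Set.Ioo 0 1) := by
  rw [← image_exp_neg,
    integrableOn_image_iff_integrableOn_abs_deriv_smul measurableSet_Ioi
      (fun t _ => (deriv_exp_neg t).hasDerivWithinAt) inj_exp_neg]
  refine IntegrableOn.congr_fun
    (integrableOn_rpow_mul_exp_neg_mul_rpow (by norm_num : (-1:ℝ) < 2) (by norm_num : (0:ℝ) < 1) ha)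
    (fun t ht => ?_) measurableSet_Ioi
  rw [Real.rpow_one, neg_mul, show (2:ℝ) = (3:ℝ)-1 from by norm_num]
  exact (key_integrand a t ht).symm

lemma key_integral {a : ℝ} (ha : 0 < a) :
    ∫ x in Set.Ioo (0:ℝ) 1, x ^ (a-1) * (Real.log x)^2 = 2 / a ^ 3 := by
  rw [← image_exp_neg,
    integral_image_eq_integral_abs_deriv_smul measurableSet_Ioi
      (fun t _ => (deriv_exp_neg t).hasDerivWithinAt) inj_exp_neg]
  rw [setIntegral_congr_fun measurableSet_Ioi (key_integrand a)]
  rw [integral_rpow_mul_exp_neg_mul_Ioi (by norm_num : (0:ℝ) < 3) ha]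
  rw [show (3:ℝ) = ((3:ℕ):ℝ) by norm_num, Real.rpow_natCast,
    show ((3:ℕ):ℝ) = ((2:ℕ):ℝ)+1 by norm_num, Real.Gamma_nat_eq_factorial]
  norm_num
  ring
end aux

/-- second moment bound for `log Y` when `Y ~ Beta(a, b)`:
`E[(log Y)²] ≤ 1 + 2 C̃ / a³`, where
`C̃ = (Γ(a+b)/(Γ(a)Γ(b))) · max{(1 − e^{−1})^{b−1}, 1}`. -/
theorem sq_log_beta_moment_bound {Ω : Type*} [MeasurableSpace Ω]
    (ℙ : Measure Ω) [IsProbabilityMeasure ℙ]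
    (a b : ℝ) (ha : 0 < a) (hb : 0 < b) (Y : Ω → ℝ)
    (hY : Measure.map Y ℙ = betaMeasure a b) :
    ∫ ω, (Real.log (Y ω)) ^ 2 ∂ℙ ≤
      1 + 2 * (Real.Gamma (a + b) / (Real.Gamma a * Real.Gamma b) *
        max ((1 - Real.exp (-1)) ^ (b - 1)) 1) / a ^ 3 := by
  set C : ℝ := Real.Gamma (a + b) / (Real.Gamma a * Real.Gamma b) with hCdef
  set M : ℝ := max ((1 - Real.exp (-1)) ^ (b - 1)) 1 with hMdef
  have hC : 0 < C := by
    apply div_pos (Real.Gamma_pos_of_pos (by linarith))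
    exact mul_pos (Real.Gamma_pos_of_pos ha) (Real.Gamma_pos_of_pos hb)
  have hM : (1:ℝ) ≤ M := le_max_right _ _
  -- density function
  set h : ℝ → ℝ := fun y => C * y ^ (a-1) * (1-y) ^ (b-1) with hhdef
  have hh_meas : Measurable h := by
    rw [hhdef]; fun_prop
  set d : ℝ → ℝ≥0∞ := fun x => ENNReal.ofReal (Set.indicator (Set.Ioo (0:ℝ) 1) h x) with hddef
  have hd_meas : Measurable d :=
    (hh_meas.indicator measurableSet_Ioo).ennreal_ofReal
  have hbeta : betaMeasure a b = volume.withDensity d := rfl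
  have hd_ind : d = Set.indicator (Set.Ioo (0:ℝ) 1) (fun x => ENNReal.ofReal (h x)) := by
    rw [hddef]
    funext x
    by_cases hx : x ∈ Set.Ioo (0:ℝ) 1
    · rw [Set.indicator_of_mem hx, Set.indicator_of_mem hx]
    · rw [Set.indicator_of_notMem hx, Set.indicator_of_notMem hx, ENNReal.ofReal_zero]
  -- Y is a.e. measurable
  have hne : betaMeasure a b ≠ 0 := by
    intro h0
    have hsupp : Set.Ioo (0:ℝ) 1 ⊆ Function.support d := by
      intro x hx
      have hpos : (0:ℝ) < h x :=
        mul_pos (mul_pos hC (Real.rpow_pos_of_pos hx.1 _))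
          (Real.rpow_pos_of_pos (by linarith [hx.2]) _)
      simp only [hddef, Function.mem_support, Set.indicator_of_mem hx, ne_eq,
        ENNReal.ofReal_eq_zero, not_le]
      exact hpos
    have h1 : (0:ℝ≥0∞) < betaMeasure a b Set.univ := by
      rw [hbeta, withDensity_apply _ MeasurableSet.univ, Measure.restrict_univ,
        lintegral_pos_iff_support hd_meas]
      refine lt_of_lt_of_le ?_ (measure_mono hsupp)
      rw [Real.volume_Ioo]; norm_num
    rw [h0] at h1
    simp at h1
  have hYm : AEMeasurable Y ℙ := by
    by_contra hY'
    rw [Measure.map_of_not_aemeasurable hY'] at hY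
    exact hne hY.symm
  -- mass one
  have hmass : ∫⁻ x in Set.Ioo (0:ℝ) 1, ENNReal.ofReal (h x) = 1 := by
    have h1 : betaMeasure a b Set.univ = 1 := by
      rw [← hY, Measure.map_apply_of_aemeasurable hYm MeasurableSet.univ]
      simp
    rw [hbeta, withDensity_apply _ MeasurableSet.univ, Measure.restrict_univ, hd_ind,
      lintegral_indicator measurableSet_Ioo] at h1
    exact h1
  -- reduce to lintegral
  have hlogm : Measurable (fun x : ℝ => ENNReal.ofReal ((Real.log x)^2)) :=
    ((Real.measurable_log.pow_const 2)).ennreal_ofReal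
  have hRHS : (0:ℝ) ≤ 1 + 2 * (C * M) / a ^ 3 := by positivity
  rw [integral_eq_lintegral_of_nonneg_ae
    (Filter.Eventually.of_forall fun ω => sq_nonneg _)
    (((Real.measurable_log.pow_const 2).comp_aemeasurable hYm).aestronglyMeasurable)]
  refine ENNReal.toReal_le_of_le_ofReal hRHS ?_
  have hmap : ∫⁻ ω, ENNReal.ofReal ((Real.log (Y ω))^2) ∂ℙ
      = ∫⁻ x, d x * ENNReal.ofReal ((Real.log x)^2) ∂volume := by
    rw [← lintegral_map' (hlogm.aemeasurable) hYm, hY, hbeta,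
      lintegral_withDensity_eq_lintegral_mul _ hd_meas hlogm]
    rfl
  rw [hmap]
  -- indicator form
  have hind : ∀ x : ℝ, d x * ENNReal.ofReal ((Real.log x)^2)
      = Set.indicator (Set.Ioo (0:ℝ) 1)
          (fun x => ENNReal.ofReal (h x) * ENNReal.ofReal ((Real.log x)^2)) x := by
    intro x
    rw [hd_ind]
    by_cases hx : x ∈ Set.Ioo (0:ℝ) 1
    · rw [Set.indicator_of_mem hx, Set.indicator_of_mem hx]
    · rw [Set.indicator_of_notMem hx, Set.indicator_of_notMem hx, zero_mul]
  simp only [hind]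
  rw [lintegral_indicator measurableSet_Ioo]
  -- split the interval
  set c : ℝ := Real.exp (-1) with hcdef
  have hc0 : 0 < c := Real.exp_pos _
  have hc1 : c < 1 := Real.exp_lt_one_iff.mpr (by norm_num)
  have hsplit : Set.Ioo (0:ℝ) 1 = Set.Ioo 0 c ∪ Set.Ico c 1 :=
    (Set.Ioo_union_Ico_eq_Ioo hc0 hc1.le).symm
  rw [hsplit, lintegral_union measurableSet_Ico
    (by rw [Set.disjoint_left]; rintro x ⟨_, h2⟩ ⟨h3, _⟩; exact absurd h3 (not_le.mpr h2))]
  -- part 1: over Ioo 0 c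
  have part1 : ∫⁻ x in Set.Ioo (0:ℝ) c,
      ENNReal.ofReal (h x) * ENNReal.ofReal ((Real.log x)^2)
      ≤ ENNReal.ofReal (C * M * (2 / a ^ 3)) := by
    have hmono : ∀ x ∈ Set.Ioo (0:ℝ) c,
        ENNReal.ofReal (h x) * ENNReal.ofReal ((Real.log x)^2)
        ≤ ENNReal.ofReal (C * M * (x ^ (a-1) * (Real.log x)^2)) := by
      intro x hx
      have hx0 := hx.1
      have hxc := hx.2
      have hh0 : (0:ℝ) ≤ h x :=
        le_of_lt (mul_pos (mul_pos hC (Real.rpow_pos_of_pos hx0 _))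
          (Real.rpow_pos_of_pos (by linarith) _))
      rw [← ENNReal.ofReal_mul hh0]
      apply ENNReal.ofReal_le_ofReal
      have hb1 : (1-x) ^ (b-1) ≤ M := by
        rcases le_or_gt 1 b with hble | hblt
        · refine le_trans (Real.rpow_le_one (by linarith) (by linarith) (by linarith)) hM
        · refine le_trans (Real.rpow_le_rpow_of_nonpos (by linarith) (by linarith)
            (by linarith)) (le_max_left _ _)
      have : h x ≤ C * M * x ^ (a-1) := by
        rw [hhdef]
        calc C * x ^ (a-1) * (1-x) ^ (b-1) ≤ C * x ^ (a-1) * M := by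
              apply mul_le_mul_of_nonneg_left hb1 (by positivity)
          _ = C * M * x ^ (a-1) := by ring
      calc h x * (Real.log x)^2 ≤ (C * M * x ^ (a-1)) * (Real.log x)^2 :=
            mul_le_mul_of_nonneg_right this (sq_nonneg _)
        _ = C * M * (x ^ (a-1) * (Real.log x)^2) := by ring
    calc ∫⁻ x in Set.Ioo (0:ℝ) c,
        ENNReal.ofReal (h x) * ENNReal.ofReal ((Real.log x)^2)
        ≤ ∫⁻ x in Set.Ioo (0:ℝ) c,
            ENNReal.ofReal (C * M * (x ^ (a-1) * (Real.log x)^2)) := by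
          exact setLIntegral_mono
            ((measurable_const.mul
              ((by fun_prop : Measurable fun x : ℝ => x ^ (a-1)).mul
                (Real.measurable_log.pow_const 2))).ennreal_ofReal)
            hmono
      _ ≤ ∫⁻ x in Set.Ioo (0:ℝ) 1,
            ENNReal.ofReal (C * M * (x ^ (a-1) * (Real.log x)^2)) := by
          exact lintegral_mono_set (Set.Ioo_subset_Ioo le_rfl hc1.le)
      _ = ENNReal.ofReal (C * M * (2 / a ^ 3)) := by
          rw [← ofReal_integral_eq_lintegral_ofReal
            (((key_integrable ha).const_mul (C*M)))
            ((ae_restrict_iff' measurableSet_Ioo).mpr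
              (Filter.Eventually.of_forall fun x hx =>
                mul_nonneg (by positivity)
                  (mul_nonneg (Real.rpow_nonneg hx.1.le _) (sq_nonneg _))))]
          rw [MeasureTheory.integral_const_mul, key_integral ha]
  -- part 2: over Ico c 1
  have part2 : ∫⁻ x in Set.Ico c (1:ℝ),
      ENNReal.ofReal (h x) * ENNReal.ofReal ((Real.log x)^2) ≤ 1 := by
    have hmono : ∀ x ∈ Set.Ico c (1:ℝ),
        ENNReal.ofReal (h x) * ENNReal.ofReal ((Real.log x)^2)
        ≤ ENNReal.ofReal (h x) := by
      intro x hx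
      have hxc := hx.1
      have hx1 := hx.2
      have hx0 : 0 < x := lt_of_lt_of_le hc0 hxc
      have hlog_lb : -1 ≤ Real.log x := by
        have := Real.log_le_log hc0 hxc
        rwa [hcdef, Real.log_exp] at this
      have hlog_ub : Real.log x ≤ 0 := Real.log_nonpos hx0.le hx1.le
      have hsq : (Real.log x)^2 ≤ 1 := by nlinarith
      calc ENNReal.ofReal (h x) * ENNReal.ofReal ((Real.log x)^2)
          ≤ ENNReal.ofReal (h x) * 1 :=
            mul_le_mul_right (ENNReal.ofReal_le_one.mpr hsq) _
        _ = ENNReal.ofReal (h x) := mul_one _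
    calc ∫⁻ x in Set.Ico c (1:ℝ),
        ENNReal.ofReal (h x) * ENNReal.ofReal ((Real.log x)^2)
        ≤ ∫⁻ x in Set.Ico c (1:ℝ), ENNReal.ofReal (h x) :=
          setLIntegral_mono (hh_meas.ennreal_ofReal) hmono
      _ ≤ ∫⁻ x in Set.Ioo (0:ℝ) 1, ENNReal.ofReal (h x) :=
          lintegral_mono_set (fun x hx => ⟨lt_of_lt_of_le hc0 hx.1, hx.2⟩)
      _ = 1 := hmass
  calc (∫⁻ x in Set.Ioo (0:ℝ) c, ENNReal.ofReal (h x) * ENNReal.ofReal ((Real.log x)^2))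
      + ∫⁻ x in Set.Ico c (1:ℝ), ENNReal.ofReal (h x) * ENNReal.ofReal ((Real.log x)^2)
      ≤ ENNReal.ofReal (C * M * (2 / a ^ 3)) + 1 := add_le_add part1 part2
    _ = ENNReal.ofReal (1 + 2 * (C * M) / a ^ 3) := by
        rw [← ENNReal.ofReal_one, ← ENNReal.ofReal_add (by positivity) (by norm_num)]
        congr 1
        ring
end

section
/- Let a, b > 0 and let Y ~ Beta(a, b). Set C̃' = (Γ(a+b)/(Γ(a)Γ(b))) · max{(1 − e^{−1})^{a−1}, 1}. Then E[(log(1 − Y))²] ≤ 1 + 2 C̃' / b³. -/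
open MeasureTheory

open Set Real

lemma aux_image : (fun t => 1 - Real.exp (-t)) '' (Ioi 0) = Ioo (0:ℝ) 1 := by
  ext u
  constructor
  · rintro ⟨t, ht, rfl⟩
    have h1 : Real.exp (-t) < 1 := Real.exp_lt_one_iff.mpr (by simpa using ht)
    have h2 : 0 < Real.exp (-t) := Real.exp_pos _
    dsimp only
    exact ⟨by linarith, by linarith⟩
  · rintro ⟨h0, h1⟩
    refine ⟨-Real.log (1 - u), mem_Ioi.mpr (neg_pos.mpr (Real.log_neg (by linarith) (by linarith))), ?_⟩
    dsimp only
    rw [neg_neg, Real.exp_log (by linarith)]; ring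

lemma aux_deriv (t : ℝ) :
    HasDerivWithinAt (fun t => 1 - Real.exp (-t)) (Real.exp (-t)) (Ioi 0) t := by
  have := ((Real.hasDerivAt_exp (-t)).comp t (hasDerivAt_neg t)).const_sub 1
  simpa using this.hasDerivWithinAt

lemma aux_inj : InjOn (fun t => 1 - Real.exp (-t)) (Ioi 0) := by
  intro x _ y _ h
  simp only [sub_right_injective.eq_iff] at h
  exact neg_injective (Real.exp_injective h)

lemma aux_integral (b : ℝ) (hb : 0 < b) :
    ∫ x in Ioo (0:ℝ) 1, (Real.log (1 - x))^2 * (1 - x) ^ (b - 1) = 2 / b^3 := by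
  rw [← aux_image, integral_image_eq_integral_abs_deriv_smul measurableSet_Ioi
    (fun t _ => aux_deriv t) aux_inj]
  rw [setIntegral_congr_fun measurableSet_Ioi (g := fun t => t ^ ((3:ℝ)-1) * Real.exp (-(b * t)))]
  · rw [Real.integral_rpow_mul_exp_neg_mul_Ioi (by norm_num) hb]
    rw [show Real.Gamma 3 = 2 by rw [show (3:ℝ) = (2:ℕ)+1 by norm_num, Real.Gamma_nat_eq_factorial]; norm_num]
    rw [show ((3:ℝ)) = ((3:ℕ):ℝ) by norm_num, Real.rpow_natCast]
    field_simp
  · intro t ht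
    simp only [sub_sub_cancel, Real.log_exp, abs_of_pos (Real.exp_pos _), smul_eq_mul]
    rw [Real.rpow_def_of_pos (Real.exp_pos _), Real.log_exp,
      show t ^ ((3:ℝ)-1) = t ^ (2:ℕ) by rw [show (3:ℝ)-1 = ((2:ℕ):ℝ) by norm_num, Real.rpow_natCast]]
    rw [neg_sq, show rexp (-t) * (t ^ 2 * rexp (-t * (b - 1))) = t^2 * (rexp (-t) * rexp (-t*(b-1))) by ring,
      ← Real.exp_add]
    ring_nf

lemma aux_integrable (b : ℝ) (hb : 0 < b) :
    IntegrableOn (fun x => (Real.log (1 - x))^2 * (1 - x) ^ (b - 1)) (Ioo (0:ℝ) 1) := by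
  rw [← aux_image, integrableOn_image_iff_integrableOn_abs_deriv_smul measurableSet_Ioi
    (fun t _ => aux_deriv t) aux_inj]
  have h := integrableOn_rpow_mul_exp_neg_mul_rpow (p := 1) (s := 2) (b := b) (by norm_num) (by norm_num) hb
  apply h.congr_fun _ measurableSet_Ioi
  intro t ht
  simp only [sub_sub_cancel, Real.log_exp, abs_of_pos (Real.exp_pos _), smul_eq_mul, Real.rpow_one]
  rw [Real.rpow_def_of_pos (Real.exp_pos _), Real.log_exp, neg_sq,
    show rexp (-t) * (t ^ 2 * rexp (-t * (b - 1))) = t^2 * (rexp (-t) * rexp (-t*(b-1))) by ring,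
    ← Real.exp_add]
  rw [show t ^ ((2:ℝ)) = t ^ (2:ℕ) by rw [← Real.rpow_natCast]; norm_num]
  ring_nf

/-- second moment bound for `log(1 − Y)` when `Y ~ Beta(a, b)`:
`E[(log(1 − Y))²] ≤ 1 + 2 C̃' / b³`, where
`C̃' = (Γ(a+b)/(Γ(a)Γ(b))) · max{(1 − e^{−1})^{a−1}, 1}`. -/
theorem sq_log_one_sub_beta_moment_bound {Ω : Type*} [MeasurableSpace Ω]
    (ℙ : Measure Ω) [IsProbabilityMeasure ℙ]
    (a b : ℝ) (ha : 0 < a) (hb : 0 < b) (Y : Ω → ℝ)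
    (hY : Measure.map Y ℙ = betaMeasure a b) :
    ∫ ω, (Real.log (1 - Y ω)) ^ 2 ∂ℙ ≤
      1 + 2 * (Real.Gamma (a + b) / (Real.Gamma a * Real.Gamma b) *
        max ((1 - Real.exp (-1)) ^ (a - 1)) 1) / b ^ 3 := by
  have hab : 0 < a + b := by linarith
  set C := Real.Gamma (a + b) / (Real.Gamma a * Real.Gamma b) with hCdef
  have hC : 0 < C := div_pos (Real.Gamma_pos_of_pos hab)
    (mul_pos (Real.Gamma_pos_of_pos ha) (Real.Gamma_pos_of_pos hb))
  set t₀ : ℝ := 1 - Real.exp (-1) with ht₀def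
  have he1 : Real.exp (-1:ℝ) < 1 := Real.exp_lt_one_iff.mpr (by norm_num)
  have he0 : (0:ℝ) < Real.exp (-1:ℝ) := Real.exp_pos _
  have ht0 : 0 < t₀ := by rw [ht₀def]; linarith
  have ht1 : t₀ < 1 := by rw [ht₀def]; linarith
  set M := max (t₀ ^ (a - 1)) 1 with hMdef
  have hM1 : (1:ℝ) ≤ M := le_max_right _ _
  have hMpos : (0:ℝ) < M := lt_of_lt_of_le one_pos hM1
  set dens := fun y : ℝ => C * y ^ (a - 1) * (1 - y) ^ (b - 1) with hdens
  set f := fun x : ℝ => ENNReal.ofReal ((Ioo (0:ℝ) 1).indicator dens x) with hf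
  have hdensmeas : Measurable dens := by
    rw [hdens]; fun_prop
  have hfmeas : Measurable f :=
    ENNReal.measurable_ofReal.comp (hdensmeas.indicator measurableSet_Ioo)
  have hbeq : betaMeasure a b = volume.withDensity f := rfl
  have hgm : Measurable fun x : ℝ => (Real.log (1 - x))^2 :=
    ((Real.measurable_log.comp (measurable_const.sub measurable_id)).pow measurable_const)
  set G := fun x : ℝ => ENNReal.ofReal ((Real.log (1 - x))^2) with hG
  have hGmeas : Measurable G := ENNReal.measurable_ofReal.comp hgm
  -- beta measure is nonzero
  have hbne : betaMeasure a b ≠ 0 := by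
    intro h0
    have h1 : ∫⁻ x, f x ∂volume = 0 := by
      have h2 := congrArg (fun μ : Measure ℝ => μ Set.univ) h0
      simpa [hbeq, withDensity_apply _ MeasurableSet.univ, Measure.restrict_univ] using h2
    have hpos : 0 < ∫⁻ x, f x ∂volume := by
      rw [lintegral_pos_iff_support hfmeas]
      have hsub : Ioo (0:ℝ) 1 ⊆ Function.support f := by
        intro x hx
        have hdx : 0 < dens x := by
          rw [hdens]
          exact mul_pos (mul_pos hC (Real.rpow_pos_of_pos hx.1 _))
            (Real.rpow_pos_of_pos (by linarith [hx.2]) _)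
        simp only [Function.mem_support, hf, indicator_of_mem hx]
        exact (ENNReal.ofReal_pos.mpr hdx).ne'
      calc (0:ENNReal) < volume (Ioo (0:ℝ) 1) := by
            rw [Real.volume_Ioo]; exact ENNReal.ofReal_pos.mpr (by norm_num)
        _ ≤ _ := measure_mono hsub
    exact absurd h1 hpos.ne'
  have hYae : AEMeasurable Y ℙ := by
    by_contra h
    rw [Measure.map_of_not_aemeasurable h] at hY
    exact hbne hY.symm
  have hprob : IsProbabilityMeasure (betaMeasure a b) := by
    rw [← hY]; exact Measure.isProbabilityMeasure_map hYae
  -- mass computation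
  have hmass : ∫⁻ x in Ioo (0:ℝ) 1, ENNReal.ofReal (dens x) ∂volume = 1 := by
    have huniv : (betaMeasure a b) Set.univ = 1 := measure_univ
    rw [hbeq, withDensity_apply _ MeasurableSet.univ, Measure.restrict_univ] at huniv
    rw [← huniv, ← lintegral_indicator measurableSet_Ioo _]
    congr 1; ext x
    by_cases hx : x ∈ Ioo (0:ℝ) 1
    · simp [hf, indicator_of_mem hx]
    · simp [hf, indicator_of_notMem hx]
  -- reduction to lintegral
  have e1 : ∫ ω, (Real.log (1 - Y ω)) ^ 2 ∂ℙ = ∫ x, (Real.log (1 - x))^2 ∂(betaMeasure a b) := by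
    rw [← hY]
    exact (integral_map hYae hgm.aestronglyMeasurable).symm
  have e2 : ∫ x, (Real.log (1 - x))^2 ∂(betaMeasure a b)
      = (∫⁻ x, G x ∂(betaMeasure a b)).toReal :=
    integral_eq_lintegral_of_nonneg_ae (ae_of_all _ fun x => sq_nonneg _)
      hgm.aestronglyMeasurable
  have e3 : ∫⁻ x, G x ∂(betaMeasure a b)
      = ∫⁻ x in Ioo (0:ℝ) 1, ENNReal.ofReal (dens x) * G x ∂volume := by
    rw [hbeq, lintegral_withDensity_eq_lintegral_mul _ hfmeas hGmeas,
      ← lintegral_indicator measurableSet_Ioo _]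
    congr 1; ext x
    by_cases hx : x ∈ Ioo (0:ℝ) 1
    · simp [hf, indicator_of_mem hx]
    · simp [hf, indicator_of_notMem hx]
  -- split the domain
  have hsplit : ∫⁻ x in Ioo (0:ℝ) 1, ENNReal.ofReal (dens x) * G x ∂volume
      = (∫⁻ x in Ioo (0:ℝ) t₀, ENNReal.ofReal (dens x) * G x ∂volume)
        + ∫⁻ x in Ico t₀ 1, ENNReal.ofReal (dens x) * G x ∂volume := by
    rw [← Set.Ioo_union_Ico_eq_Ioo ht0 ht1.le,
      lintegral_union measurableSet_Ico (Set.Ico_disjoint_Ico_same.mono_left Set.Ioo_subset_Ico_self)]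
  -- first piece
  have hL1 : ∫⁻ x in Ioo (0:ℝ) t₀, ENNReal.ofReal (dens x) * G x ∂volume ≤ 1 := by
    have hb1 : ∀ x ∈ Ioo (0:ℝ) t₀, ENNReal.ofReal (dens x) * G x ≤ ENNReal.ofReal (dens x) := by
      intro x hx
      have hxt : x < t₀ := hx.2
      have hxt' : Real.exp (-1) < 1 - x := by rw [ht₀def] at hxt; linarith
      have hlog : (Real.log (1 - x))^2 ≤ 1 := by
        rw [sq_le_one_iff_abs_le_one, abs_le]
        constructor
        · have := (Real.lt_log_iff_exp_lt (by linarith : (0:ℝ) < 1 - x)).mpr hxt'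
          linarith
        · exact le_trans (Real.log_nonpos (by linarith [hx.1]) (by linarith [hx.1])) zero_le_one
      calc ENNReal.ofReal (dens x) * G x ≤ ENNReal.ofReal (dens x) * 1 := by
            gcongr
            exact ENNReal.ofReal_le_one.mpr hlog
        _ = _ := mul_one _
    calc ∫⁻ x in Ioo (0:ℝ) t₀, ENNReal.ofReal (dens x) * G x ∂volume
        ≤ ∫⁻ x in Ioo (0:ℝ) t₀, ENNReal.ofReal (dens x) ∂volume :=
          setLIntegral_mono' measurableSet_Ioo hb1
      _ ≤ ∫⁻ x in Ioo (0:ℝ) 1, ENNReal.ofReal (dens x) ∂volume :=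
          lintegral_mono_set (Set.Ioo_subset_Ioo_right ht1.le)
      _ = 1 := hmass
  -- second piece
  have hpoint : ∀ x ∈ Ico t₀ 1, ENNReal.ofReal (dens x) * G x
      ≤ ENNReal.ofReal (C * M) * ENNReal.ofReal ((Real.log (1 - x))^2 * (1 - x) ^ (b - 1)) := by
    intro x hx
    have hx0 : 0 < x := lt_of_lt_of_le ht0 hx.1
    have hx1 : x < 1 := hx.2
    have h1x : (0:ℝ) ≤ 1 - x := by linarith
    have hrp : (0:ℝ) ≤ (1 - x) ^ (b - 1) := Real.rpow_nonneg h1x _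
    have hsq : (0:ℝ) ≤ (Real.log (1 - x))^2 := sq_nonneg _
    have hxa : x ^ (a - 1) ≤ M := by
      rcases le_or_gt 1 a with hle | hlt
      · exact le_trans (Real.rpow_le_one hx0.le hx1.le (by linarith)) hM1
      · exact le_trans (Real.rpow_le_rpow_of_nonpos ht0 hx.1 (by linarith)) (le_max_left _ _)
    have hdnn : 0 ≤ dens x := by
      rw [hdens]
      exact mul_nonneg (mul_nonneg hC.le (Real.rpow_nonneg hx0.le _)) hrp
    have hd : dens x * (Real.log (1 - x))^2
        ≤ C * M * ((Real.log (1 - x))^2 * (1 - x) ^ (b - 1)) := by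
      have hmul := mul_le_mul_of_nonneg_right hxa
        (mul_nonneg hC.le (mul_nonneg hsq hrp))
      calc dens x * (Real.log (1 - x))^2
          = x ^ (a - 1) * (C * ((Real.log (1 - x))^2 * (1 - x) ^ (b - 1))) := by
            rw [hdens]; ring
        _ ≤ M * (C * ((Real.log (1 - x))^2 * (1 - x) ^ (b - 1))) := hmul
        _ = C * M * ((Real.log (1 - x))^2 * (1 - x) ^ (b - 1)) := by ring
    calc ENNReal.ofReal (dens x) * G x
        = ENNReal.ofReal (dens x * (Real.log (1 - x))^2) := (ENNReal.ofReal_mul hdnn).symm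
      _ ≤ ENNReal.ofReal (C * M * ((Real.log (1 - x))^2 * (1 - x) ^ (b - 1))) :=
          ENNReal.ofReal_le_ofReal hd
      _ = ENNReal.ofReal (C * M) * ENNReal.ofReal ((Real.log (1 - x))^2 * (1 - x) ^ (b - 1)) :=
          ENNReal.ofReal_mul (by positivity)
  have hkey : ∫⁻ x in Ioo (0:ℝ) 1, ENNReal.ofReal ((Real.log (1 - x))^2 * (1 - x) ^ (b - 1)) ∂volume
      = ENNReal.ofReal (2 / b^3) := by
    rw [← ofReal_integral_eq_lintegral_ofReal (aux_integrable b hb) ?_, aux_integral b hb]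
    filter_upwards [ae_restrict_mem measurableSet_Ioo] with x hx
    exact mul_nonneg (sq_nonneg _) (Real.rpow_nonneg (by linarith [hx.2]) _)
  have hL2 : ∫⁻ x in Ico t₀ 1, ENNReal.ofReal (dens x) * G x ∂volume
      ≤ ENNReal.ofReal (C * M) * ENNReal.ofReal (2 / b^3) := by
    calc ∫⁻ x in Ico t₀ 1, ENNReal.ofReal (dens x) * G x ∂volume
        ≤ ∫⁻ x in Ico t₀ 1, ENNReal.ofReal (C * M) *
            ENNReal.ofReal ((Real.log (1 - x))^2 * (1 - x) ^ (b - 1)) ∂volume :=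
          setLIntegral_mono' measurableSet_Ico hpoint
      _ ≤ ∫⁻ x in Ioo (0:ℝ) 1, ENNReal.ofReal (C * M) *
            ENNReal.ofReal ((Real.log (1 - x))^2 * (1 - x) ^ (b - 1)) ∂volume :=
          lintegral_mono_set (fun x hx => ⟨lt_of_lt_of_le ht0 hx.1, hx.2⟩)
      _ = ENNReal.ofReal (C * M) *
            ∫⁻ x in Ioo (0:ℝ) 1, ENNReal.ofReal ((Real.log (1 - x))^2 * (1 - x) ^ (b - 1)) ∂volume :=
          lintegral_const_mul' _ _ ENNReal.ofReal_ne_top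
      _ = _ := by rw [hkey]
  -- conclude
  rw [e1, e2]
  apply ENNReal.toReal_le_of_le_ofReal (by positivity)
  rw [e3, hsplit]
  calc (∫⁻ x in Ioo (0:ℝ) t₀, ENNReal.ofReal (dens x) * G x ∂volume)
        + ∫⁻ x in Ico t₀ 1, ENNReal.ofReal (dens x) * G x ∂volume
      ≤ 1 + ENNReal.ofReal (C * M) * ENNReal.ofReal (2 / b^3) := add_le_add hL1 hL2
    _ = ENNReal.ofReal (1 + 2 * (C * M) / b ^ 3) := by
        rw [← ENNReal.ofReal_mul (by positivity), ← ENNReal.ofReal_one,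
          ← ENNReal.ofReal_add (by norm_num) (by positivity)]
        congr 1
        ring
end

section
/- In the Beta regression model under Assumption (A3), let κ > 0 and set u = κ log(2n)/(c_h φ*), where c_h = 1/(1 + e^h). Let m(y) = max{−log y, −log(1 − y)} for y ∈ (0,1). Then there exists a constant C_{φ*,h} > 0 depending only on φ* and h such that P( max_{1 ≤ i ≤ n} m(Y_i) > u ) ≤ C_{φ*,h} · n^{1−κ}. -/
open MeasureTheory ProbabilityTheory
open scoped RealInnerProductSpace

/-- The logistic (sigmoid) function `σ(z) = e^z / (1 + e^z)`. -/
noncomputable def logistic (z : ℝ) : ℝ := Real.exp z / (1 + Real.exp z)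

lemma brt_lintegral_rpow (r t : ℝ) (hr : 0 < r) (ht : 0 ≤ t) :
    ∫⁻ x in Set.Ioo (0:ℝ) t, ENNReal.ofReal (x ^ (r - 1)) = ENNReal.ofReal (t ^ r / r) := by
  have hint : IntervalIntegrable (fun x : ℝ => x ^ (r - 1)) volume 0 t :=
    intervalIntegral.intervalIntegrable_rpow' (by linarith)
  have hIoo : IntegrableOn (fun x : ℝ => x ^ (r - 1)) (Set.Ioo 0 t) :=
    hint.1.mono_set Set.Ioo_subset_Ioc_self
  have hnn : 0 ≤ᵐ[volume.restrict (Set.Ioo (0:ℝ) t)] fun x : ℝ => x ^ (r - 1) :=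
    (ae_restrict_iff' measurableSet_Ioo).mpr
      (Filter.Eventually.of_forall fun x hx => Real.rpow_nonneg hx.1.le _)
  rw [← ofReal_integral_eq_lintegral_ofReal hIoo hnn]
  congr 1
  rw [← integral_Ioc_eq_integral_Ioo, ← intervalIntegral.integral_of_le ht,
    integral_rpow (Or.inl (by linarith)), sub_add_cancel, Real.zero_rpow hr.ne', sub_zero]

lemma brt_lintegral_rpow' (r t : ℝ) (hr : 0 < r) (ht : 0 ≤ t) :
    ∫⁻ x in Set.Ioo (1 - t) (1:ℝ), ENNReal.ofReal ((1 - x) ^ (r - 1)) =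
      ENNReal.ofReal (t ^ r / r) := by
  have hint : IntervalIntegrable (fun x : ℝ => x ^ (r - 1)) volume 0 t :=
    intervalIntegral.intervalIntegrable_rpow' (by linarith)
  have hint2 : IntervalIntegrable (fun x : ℝ => (1 - x) ^ (r - 1)) volume (1 - 0) (1 - t) :=
    hint.comp_sub_left 1
  have hIoo : IntegrableOn (fun x : ℝ => (1 - x) ^ (r - 1)) (Set.Ioo (1 - t) 1) := by
    have := hint2.2
    rw [sub_zero] at this
    exact this.mono_set Set.Ioo_subset_Ioc_self
  have hnn : 0 ≤ᵐ[volume.restrict (Set.Ioo (1-t) (1:ℝ))] fun x : ℝ => (1 - x) ^ (r - 1) :=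
    (ae_restrict_iff' measurableSet_Ioo).mpr
      (Filter.Eventually.of_forall fun x hx => Real.rpow_nonneg (by linarith [hx.2]) _)
  rw [← ofReal_integral_eq_lintegral_ofReal hIoo hnn]
  congr 1
  rw [← integral_Ioc_eq_integral_Ioo, ← intervalIntegral.integral_of_le (by linarith : 1 - t ≤ 1),
    intervalIntegral.integral_comp_sub_left (fun x : ℝ => x ^ (r - 1)) 1]
  norm_num
  rw [integral_rpow (Or.inl (by linarith)), sub_add_cancel, Real.zero_rpow hr.ne', sub_zero]

lemma brt_gamma_min (c d : ℝ) (hc : 0 < c) (hcd : c ≤ d) :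
    ∃ γ : ℝ, 0 < γ ∧ ∀ x ∈ Set.Icc c d, γ ≤ Real.Gamma x := by
  have hcont : ContinuousOn Real.Gamma (Set.Icc c d) := by
    intro x hx
    refine (Real.differentiableAt_Gamma fun m => ?_).continuousAt.continuousWithinAt
    have h0 : (0:ℝ) < x := lt_of_lt_of_le hc hx.1
    have h1 : (-(m:ℝ)) ≤ 0 := neg_nonpos.mpr (Nat.cast_nonneg m)
    intro hxx; rw [hxx] at h0; linarith
  obtain ⟨x₀, hx₀, hmin⟩ := isCompact_Icc.exists_isMinOn ⟨c, Set.left_mem_Icc.mpr hcd⟩ hcont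
  exact ⟨Real.Gamma x₀, Real.Gamma_pos_of_pos (lt_of_lt_of_le hc hx₀.1),
    fun x hx => hmin hx⟩

lemma brt_rpow_le_two {z b : ℝ} (hz : 1/2 ≤ z) (hz1 : z ≤ 1) (hb : 0 < b) :
    z ^ (b - 1) ≤ 2 := by
  have hz0 : (0:ℝ) < z := by linarith
  rw [Real.rpow_sub hz0, Real.rpow_one]
  have h1 : z ^ b ≤ 1 := Real.rpow_le_one hz0.le hz1 hb.le
  rw [div_le_iff₀ hz0]
  nlinarith

lemma brt_measurableS (u : ℝ) :
    MeasurableSet {y : ℝ | u < max (-Real.log y) (-Real.log (1 - y))} :=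
  measurableSet_lt measurable_const
    ((Real.measurable_log.neg).max
      ((Real.measurable_log.comp (measurable_const.sub measurable_id)).neg))

lemma brt_beta_tail (a b u K : ℝ) (ha : 0 < a) (hb : 0 < b) (hu : 0 < u)
    (htu : Real.exp (-u) ≤ 1/2)
    (hK : Real.Gamma (a + b) / (Real.Gamma a * Real.Gamma b) ≤ K) :
    _root_.betaMeasure a b {y : ℝ | u < max (-Real.log y) (-Real.log (1 - y))} ≤
      ENNReal.ofReal (2 * K * (Real.exp (-u) ^ a / a + Real.exp (-u) ^ b / b)) := by
  set t := Real.exp (-u) with ht_def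
  have ht0 : 0 < t := Real.exp_pos _
  set Kq := Real.Gamma (a + b) / (Real.Gamma a * Real.Gamma b) with hKq_def
  have hKq0 : 0 < Kq := by
    apply div_pos (Real.Gamma_pos_of_pos (by linarith))
    exact mul_pos (Real.Gamma_pos_of_pos ha) (Real.Gamma_pos_of_pos hb)
  have hK0 : 0 ≤ K := le_trans hKq0.le hK
  set S := {y : ℝ | u < max (-Real.log y) (-Real.log (1 - y))} with hS_def
  have hS : MeasurableSet S := brt_measurableS u
  set F : ℝ → ℝ := fun y => Kq * y ^ (a - 1) * (1 - y) ^ (b - 1) with hF_def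
  have h1 : _root_.betaMeasure a b S = ∫⁻ x in Set.Ioo (0:ℝ) 1 ∩ S, ENNReal.ofReal (F x) := by
    rw [_root_.betaMeasure, withDensity_apply _ hS]
    have : ∀ x, ENNReal.ofReal (Set.indicator (Set.Ioo (0:ℝ) 1) F x) =
        Set.indicator (Set.Ioo (0:ℝ) 1) (fun y => ENNReal.ofReal (F y)) x := by
      intro x; by_cases hx : x ∈ Set.Ioo (0:ℝ) 1 <;> simp [hx]
    change ∫⁻ x in S, ENNReal.ofReal ((Set.Ioo (0:ℝ) 1).indicator F x) = _
    simp_rw [this]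
    rw [lintegral_indicator measurableSet_Ioo, Measure.restrict_restrict measurableSet_Ioo]
  have hsub : Set.Ioo (0:ℝ) 1 ∩ S ⊆ Set.Ioo 0 t ∪ Set.Ioo (1 - t) 1 := by
    rintro y ⟨⟨hy0, hy1⟩, hyS⟩
    rcases le_or_gt (-Real.log y) (-Real.log (1 - y)) with hc | hc
    · right
      rw [hS_def, Set.mem_setOf_eq, max_eq_right hc] at hyS
      have : Real.log (1 - y) < -u := by linarith
      have := (Real.log_lt_iff_lt_exp (by linarith)).mp this
      exact ⟨by linarith, hy1⟩
    · left
      rw [hS_def, Set.mem_setOf_eq, max_eq_left hc.le] at hyS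
      have : Real.log y < -u := by linarith
      exact ⟨hy0, (Real.log_lt_iff_lt_exp hy0).mp this⟩
  have h2 : _root_.betaMeasure a b S ≤
      (∫⁻ x in Set.Ioo (0:ℝ) t, ENNReal.ofReal (F x)) +
      ∫⁻ x in Set.Ioo (1 - t) (1:ℝ), ENNReal.ofReal (F x) := by
    rw [h1]
    exact le_trans (lintegral_mono_set hsub) (lintegral_union_le _ _ _)
  have hbd1 : (∫⁻ x in Set.Ioo (0:ℝ) t, ENNReal.ofReal (F x)) ≤
      ENNReal.ofReal (2 * K * (t ^ a / a)) := by
    have hmono : ∀ x ∈ Set.Ioo (0:ℝ) t, ENNReal.ofReal (F x) ≤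
        ENNReal.ofReal (2 * K * x ^ (a - 1)) := by
      intro x hx
      apply ENNReal.ofReal_le_ofReal
      have hx2 : (1:ℝ)/2 ≤ 1 - x := by linarith [hx.2]
      have h2x : (1 - x) ^ (b - 1) ≤ 2 := brt_rpow_le_two hx2 (by linarith [hx.1]) hb
      have hxp : 0 ≤ x ^ (a - 1) := Real.rpow_nonneg hx.1.le _
      have h1x : 0 ≤ (1 - x) ^ (b - 1) := Real.rpow_nonneg (by linarith [hx.2]) _
      calc Kq * x ^ (a - 1) * (1 - x) ^ (b - 1) ≤ K * x ^ (a - 1) * 2 := by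
            apply mul_le_mul _ h2x h1x (by positivity)
            exact mul_le_mul hK le_rfl hxp hK0
        _ = 2 * K * x ^ (a - 1) := by ring
    calc (∫⁻ x in Set.Ioo (0:ℝ) t, ENNReal.ofReal (F x)) ≤
        ∫⁻ x in Set.Ioo (0:ℝ) t, ENNReal.ofReal (2 * K) * ENNReal.ofReal (x ^ (a - 1)) := by
          apply setLIntegral_mono' measurableSet_Ioo
          intro x hx
          rw [← ENNReal.ofReal_mul (by positivity)]
          exact hmono x hx
      _ = ENNReal.ofReal (2 * K) * ENNReal.ofReal (t ^ a / a) := by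
          rw [lintegral_const_mul' _ _ ENNReal.ofReal_ne_top, brt_lintegral_rpow a t ha ht0.le]
      _ = ENNReal.ofReal (2 * K * (t ^ a / a)) := by
          rw [← ENNReal.ofReal_mul (by positivity)]
  have hbd2 : (∫⁻ x in Set.Ioo (1 - t) (1:ℝ), ENNReal.ofReal (F x)) ≤
      ENNReal.ofReal (2 * K * (t ^ b / b)) := by
    have hmono : ∀ x ∈ Set.Ioo (1 - t) (1:ℝ), ENNReal.ofReal (F x) ≤
        ENNReal.ofReal (2 * K * (1 - x) ^ (b - 1)) := by
      intro x hx
      apply ENNReal.ofReal_le_ofReal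
      have hx2 : (1:ℝ)/2 ≤ x := by linarith [hx.1]
      have h2x : x ^ (a - 1) ≤ 2 := brt_rpow_le_two hx2 hx.2.le ha
      have hxp : 0 ≤ x ^ (a - 1) := Real.rpow_nonneg (by linarith) _
      have h1x : 0 ≤ (1 - x) ^ (b - 1) := Real.rpow_nonneg (by linarith [hx.2]) _
      calc Kq * x ^ (a - 1) * (1 - x) ^ (b - 1) ≤ K * 2 * (1 - x) ^ (b - 1) := by
            apply mul_le_mul _ le_rfl h1x (by positivity)
            exact mul_le_mul hK h2x hxp hK0
        _ = 2 * K * (1 - x) ^ (b - 1) := by ring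
    calc (∫⁻ x in Set.Ioo (1 - t) (1:ℝ), ENNReal.ofReal (F x)) ≤
        ∫⁻ x in Set.Ioo (1 - t) (1:ℝ),
          ENNReal.ofReal (2 * K) * ENNReal.ofReal ((1 - x) ^ (b - 1)) := by
          apply setLIntegral_mono' measurableSet_Ioo
          intro x hx
          rw [← ENNReal.ofReal_mul (by positivity)]
          exact hmono x hx
      _ = ENNReal.ofReal (2 * K) * ENNReal.ofReal (t ^ b / b) := by
          rw [lintegral_const_mul' _ _ ENNReal.ofReal_ne_top, brt_lintegral_rpow' b t hb ht0.le]
      _ = ENNReal.ofReal (2 * K * (t ^ b / b)) := by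
          rw [← ENNReal.ofReal_mul (by positivity)]
  calc _root_.betaMeasure a b S ≤ _ := h2
    _ ≤ ENNReal.ofReal (2 * K * (t ^ a / a)) + ENNReal.ofReal (2 * K * (t ^ b / b)) :=
        add_le_add hbd1 hbd2
    _ = ENNReal.ofReal (2 * K * (t ^ a / a + t ^ b / b)) := by
        rw [← ENNReal.ofReal_add (by positivity) (by positivity)]; ring_nf

lemma brt_kernel_bound (φstar c' γ u σz : ℝ)
    (hφ : 0 < φstar) (hc' : 0 < c') (hσ1 : c' ≤ σz * φstar) (hσ2 : c' ≤ (1 - σz) * φstar)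
    (hγ : 0 < γ) (hγle : ∀ x ∈ Set.Icc c' φstar, γ ≤ Real.Gamma x)
    (hu : 0 < u) (hcase : Real.exp (-u) ≤ 1/2) :
    _root_.betaMeasure (σz * φstar) ((1 - σz) * φstar)
        {y : ℝ | u < max (-Real.log y) (-Real.log (1 - y))} ≤
      ENNReal.ofReal (4 * (Real.Gamma φstar / (γ * γ)) * Real.exp (-u) ^ c' / c') := by
  set t : ℝ := Real.exp (-u) with ht_def
  have ht0 : 0 < t := Real.exp_pos _
  have ht1 : t ≤ 1 := by linarith
  set G : ℝ := Real.Gamma φstar / (γ * γ) with hG_def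
  have hG : 0 < G := div_pos (Real.Gamma_pos_of_pos hφ) (by positivity)
  set a : ℝ := σz * φstar
  set b : ℝ := (1 - σz) * φstar
  have ha : 0 < a := lt_of_lt_of_le hc' hσ1
  have hb : 0 < b := lt_of_lt_of_le hc' hσ2
  have hab : a + b = φstar := by ring
  have haφ : a ≤ φstar := by nlinarith
  have hbφ : b ≤ φstar := by nlinarith
  have hKb : Real.Gamma (a + b) / (Real.Gamma a * Real.Gamma b) ≤ G := by
    rw [hab, hG_def]
    have hga := hγle a ⟨hσ1, haφ⟩
    have hgb := hγle b ⟨hσ2, hbφ⟩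
    apply div_le_div_of_nonneg_left (Real.Gamma_pos_of_pos hφ).le (by positivity)
    nlinarith
  refine le_trans (brt_beta_tail a b u G ha hb hu hcase hKb) ?_
  apply ENNReal.ofReal_le_ofReal
  have htc' : (0:ℝ) ≤ t ^ c' := Real.rpow_nonneg ht0.le _
  have hta : t ^ a ≤ t ^ c' := Real.rpow_le_rpow_of_exponent_ge ht0 ht1 hσ1
  have htb : t ^ b ≤ t ^ c' := Real.rpow_le_rpow_of_exponent_ge ht0 ht1 hσ2
  have h1 : t ^ a / a ≤ t ^ c' / c' := div_le_div₀ htc' hta hc' hσ1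
  have h2 : t ^ b / b ≤ t ^ c' / c' := div_le_div₀ htc' htb hc' hσ2
  calc 2 * G * (t ^ a / a + t ^ b / b) ≤ 2 * G * (t ^ c' / c' + t ^ c' / c') := by nlinarith
    _ = 4 * G * t ^ c' / c' := by ring

lemma brt_logistic_bounds {z h : ℝ} (hz : |z| ≤ h) :
    (1 + Real.exp h)⁻¹ ≤ logistic z ∧ (1 + Real.exp h)⁻¹ ≤ 1 - logistic z := by
  obtain ⟨hz1, hz2⟩ := abs_le.mp hz
  have hE : 0 < Real.exp z := Real.exp_pos z
  have hEh : 0 < Real.exp h := Real.exp_pos h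
  have h1E : (0:ℝ) < 1 + Real.exp z := by linarith
  have h1Eh : (0:ℝ) < 1 + Real.exp h := by linarith
  constructor
  · rw [logistic, inv_eq_one_div, div_le_div_iff₀ h1Eh h1E]
    have h1 : (1:ℝ) ≤ Real.exp z * Real.exp h := by
      rw [← Real.exp_add]
      calc (1:ℝ) = Real.exp 0 := Real.exp_zero.symm
        _ ≤ _ := Real.exp_le_exp.mpr (by linarith)
    nlinarith
  · have hls : 1 - logistic z = 1 / (1 + Real.exp z) := by
      rw [logistic]; field_simp; ring
    rw [hls, inv_eq_one_div, div_le_div_iff₀ h1Eh h1E]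
    have := Real.exp_le_exp.mpr hz2
    nlinarith

/-- in the Beta regression model under (A3), with
`u = κ log(2n)/(c_h φ*)`, `c_h = 1/(1+e^h)` and `m(y) = max{−log y, −log(1−y)}`, there is a
constant `C_{φ*,h} > 0` depending only on `φ*` and `h` such that
`P(max_{1≤i≤n} m(Y_i) > u) ≤ C_{φ*,h} n^{1−κ}`. -/
theorem beta_regression_log_response_truncation (φstar h κ : ℝ)
    (hφ : 0 < φstar) (hh : 0 < h) (hκ : 0 < κ) :
    ∃ C : ℝ, 0 < C ∧
      ∀ (n p : ℕ), 0 < n →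
      ∀ (Ω : Type) [MeasurableSpace Ω] (P : Measure Ω) [IsProbabilityMeasure P]
        (X : Fin n → Ω → EuclideanSpace ℝ (Fin p)) (Y : Fin n → Ω → ℝ)
        (βstar : EuclideanSpace ℝ (Fin p)),
        (∀ i, Measurable (X i)) → (∀ i, Measurable (Y i)) →
        -- model: `Y_i | X_i ~ Beta(σ(X_iᵀβ*) φ*, (1 − σ(X_iᵀβ*)) φ*)`
        (∀ i, ∀ᵐ ω ∂P, condDistrib (Y i) (X i) P (X i ω) =
          _root_.betaMeasure (logistic ⟪X i ω, βstar⟫ * φstar)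
            ((1 - logistic ⟪X i ω, βstar⟫) * φstar)) →
        -- Assumption (A3): `|X_iᵀβ*| ≤ h` almost surely
        (∀ i, ∀ᵐ ω ∂P, |⟪X i ω, βstar⟫| ≤ h) →
        (P {ω | ∃ i, κ * Real.log (2 * n) / ((1 + Real.exp h)⁻¹ * φstar) <
            max (-Real.log (Y i ω)) (-Real.log (1 - Y i ω))}).toReal ≤
          C * (n : ℝ) ^ ((1 : ℝ) - κ) := by
  have hEh : 0 < Real.exp h := Real.exp_pos h
  set ch : ℝ := (1 + Real.exp h)⁻¹ with hch_def
  have hch : 0 < ch := by rw [hch_def]; positivity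
  set c' : ℝ := ch * φstar with hc'_def
  have hc' : 0 < c' := by positivity
  have hch1 : ch ≤ 1 := by
    rw [hch_def, inv_le_one_iff₀]; right; linarith
  have hc'le : c' ≤ φstar := by nlinarith
  obtain ⟨γ, hγ, hγle⟩ := brt_gamma_min c' φstar hc' hc'le
  set G : ℝ := Real.Gamma φstar / (γ * γ) with hG_def
  have hG : 0 < G := div_pos (Real.Gamma_pos_of_pos hφ) (by positivity)
  set C : ℝ := 2 ^ c' + 1 + 4 * G / c' with hC_def
  have h2c : (0:ℝ) < 2 ^ c' := Real.rpow_pos_of_pos (by norm_num) _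
  have hC : 0 < C := by positivity
  have hdiv : 0 < 4 * G / c' := by positivity
  have hC1 : (1:ℝ) ≤ C := by rw [hC_def]; linarith
  refine ⟨C, hC, ?_⟩
  intro n p hn Ω _ P _ X Y βstar hX hY hmodel hA3
  set u : ℝ := κ * Real.log (2 * n) / (ch * φstar) with hu_def
  have hn1 : (1:ℝ) ≤ n := Nat.one_le_cast.mpr hn
  have h2n : (1:ℝ) < 2 * n := by linarith
  have hlog : 0 < Real.log (2 * n) := Real.log_pos h2n
  have hu : 0 < u := by rw [hu_def]; positivity
  have hnpos : (0:ℝ) < n := by linarith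
  have hrpow_pos : (0:ℝ) < (n:ℝ) ^ ((1:ℝ) - κ) := Real.rpow_pos_of_pos hnpos _
  by_cases hcase : Real.exp (-u) ≤ 1/2
  · -- main case
    set t : ℝ := Real.exp (-u) with ht_def
    have ht0 : 0 < t := Real.exp_pos _
    set S := {y : ℝ | u < max (-Real.log y) (-Real.log (1 - y))} with hS_def
    have hS : MeasurableSet S := brt_measurableS u
    set B : ℝ := 4 * G * t ^ c' / c' with hB_def
    have htc' : (0:ℝ) ≤ t ^ c' := Real.rpow_nonneg ht0.le _
    have hper : ∀ i, P (Y i ⁻¹' S) ≤ ENNReal.ofReal B := by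
      intro i
      have key : P (Y i ⁻¹' S) = ∫⁻ ω, condDistrib (Y i) (X i) P (X i ω) S ∂P := by
        have := ProbabilityTheory.setLIntegral_preimage_condDistrib (hX i)
          ((hY i).aemeasurable (μ := P)) hS (MeasurableSet.univ
            (α := EuclideanSpace ℝ (Fin p)))
        simpa using this.symm
      rw [key]
      have hae : ∀ᵐ ω ∂P, condDistrib (Y i) (X i) P (X i ω) S ≤ ENNReal.ofReal B := by
        filter_upwards [hmodel i, hA3 i] with ω hmω haω
        obtain ⟨hl, hr⟩ := brt_logistic_bounds haω
        rw [hmω]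
        have hσ1 : c' ≤ logistic ⟪X i ω, βstar⟫ * φstar :=
          mul_le_mul_of_nonneg_right hl hφ.le
        have hσ2 : c' ≤ (1 - logistic ⟪X i ω, βstar⟫) * φstar :=
          mul_le_mul_of_nonneg_right hr hφ.le
        exact brt_kernel_bound φstar c' γ u (logistic ⟪X i ω, βstar⟫)
          hφ hc' hσ1 hσ2 hγ hγle hu hcase
      calc ∫⁻ ω, condDistrib (Y i) (X i) P (X i ω) S ∂P ≤ ∫⁻ _, ENNReal.ofReal B ∂P :=
            lintegral_mono_ae hae
        _ = ENNReal.ofReal B := by simp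
    have hev : {ω | ∃ i, u < max (-Real.log (Y i ω)) (-Real.log (1 - Y i ω))} =
        ⋃ i, Y i ⁻¹' S := by
      ext ω; simp only [hS_def, Set.mem_setOf_eq, Set.mem_iUnion, Set.mem_preimage]
    have hsum : P {ω | ∃ i, u < max (-Real.log (Y i ω)) (-Real.log (1 - Y i ω))} ≤
        ENNReal.ofReal ((n : ℝ) * B) := by
      rw [hev]
      refine le_trans (measure_iUnion_le _) ?_
      calc ∑' i : Fin n, P (Y i ⁻¹' S) ≤ ∑' _ : Fin n, ENNReal.ofReal B :=
            ENNReal.tsum_le_tsum hper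
        _ = (n : ENNReal) * ENNReal.ofReal B := by
            rw [tsum_fintype, Finset.sum_const, Finset.card_univ, Fintype.card_fin,
              nsmul_eq_mul]
        _ = ENNReal.ofReal ((n : ℝ) * B) := by
            rw [ENNReal.ofReal_mul (by positivity), ENNReal.ofReal_natCast]
    refine ENNReal.toReal_le_of_le_ofReal (by positivity)
      (le_trans hsum (ENNReal.ofReal_le_ofReal ?_))
    have htc : t ^ c' = 2 ^ (-κ) * (n:ℝ) ^ (-κ) := by
      rw [ht_def]
      have harg : -u * c' = Real.log (2 * n) * (-κ) := by
        rw [hu_def, hc'_def]; field_simp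
      rw [← Real.exp_mul, harg, Real.exp_mul, Real.exp_log (by linarith),
        ← Real.mul_rpow (by norm_num) (by positivity)]
    have hn1κ : (n:ℝ) * (n:ℝ) ^ (-κ) = (n:ℝ) ^ ((1:ℝ) - κ) := by
      rw [show (1:ℝ) - κ = 1 + (-κ) by ring, Real.rpow_add hnpos, Real.rpow_one]
    have h2κ : (2:ℝ) ^ (-κ) ≤ 1 :=
      Real.rpow_le_one_of_one_le_of_nonpos (by norm_num) (by linarith)
    have h2κ0 : (0:ℝ) ≤ (2:ℝ) ^ (-κ) := Real.rpow_nonneg (by norm_num) _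
    rw [hB_def, htc]
    calc (n:ℝ) * (4 * G * (2 ^ (-κ) * (n:ℝ) ^ (-κ)) / c')
        = (4 * G / c') * (2:ℝ) ^ (-κ) * ((n:ℝ) * (n:ℝ) ^ (-κ)) := by ring
      _ ≤ (4 * G / c') * 1 * ((n:ℝ) * (n:ℝ) ^ (-κ)) := by
          apply mul_le_mul_of_nonneg_right _ (by positivity)
          exact mul_le_mul_of_nonneg_left h2κ (by positivity)
      _ = (4 * G / c') * (n:ℝ) ^ ((1:ℝ) - κ) := by rw [hn1κ]; ring
      _ ≤ C * (n:ℝ) ^ ((1:ℝ) - κ) := by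
          apply mul_le_mul_of_nonneg_right _ hrpow_pos.le
          rw [hC_def]; linarith
  · -- trivial case: exp(-u) > 1/2
    push_neg at hcase
    have hu2 : u ≤ Real.log 2 := by
      have h' : Real.exp (-u) ≤ Real.exp (Real.log (1/2)) → False := by
        intro hle
        rw [Real.exp_log (by norm_num)] at hle
        linarith
      by_contra hcon
      push_neg at hcon
      apply h'
      apply Real.exp_le_exp.mpr
      rw [Real.log_div one_ne_zero (by norm_num), Real.log_one]
      linarith
    have hklog : κ * Real.log (2 * n) ≤ c' * Real.log 2 := by
      rw [hu_def] at hu2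
      rw [div_le_iff₀ (by positivity)] at hu2
      rw [hc'_def]; linarith
    have hone : 1 ≤ C * (n:ℝ) ^ ((1:ℝ) - κ) := by
      rcases le_or_gt κ 1 with hκ1 | hκ1
      · have : (1:ℝ) ≤ (n:ℝ) ^ ((1:ℝ) - κ) :=
          Real.one_le_rpow hn1 (by linarith)
        nlinarith [hC1, this]
      · have hle1 : (n:ℝ) ^ (κ - 1) ≤ (n:ℝ) ^ κ :=
          Real.rpow_le_rpow_of_exponent_le hn1 (by linarith)
        have hle2 : (n:ℝ) ^ κ ≤ (2 * n:ℝ) ^ κ :=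
          Real.rpow_le_rpow (by positivity) (by linarith) hκ.le
        have hle3 : (2 * n:ℝ) ^ κ ≤ (2:ℝ) ^ c' := by
          rw [Real.rpow_def_of_pos (by linarith : (0:ℝ) < 2 * n),
            Real.rpow_def_of_pos (by norm_num : (0:ℝ) < 2)]
          exact Real.exp_le_exp.mpr (by linarith [hklog])
        have hle4 : (n:ℝ) ^ (κ - 1) ≤ C := by
          rw [hC_def]; linarith [hle1, hle2, hle3, hdiv]
        have := mul_le_mul_of_nonneg_right hle4 hrpow_pos.le
        rw [← Real.rpow_add hnpos] at this
        simpa using this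
    calc (P _).toReal ≤ (1 : ENNReal).toReal :=
          ENNReal.toReal_mono ENNReal.one_ne_top prob_le_one
      _ = 1 := by simp
      _ ≤ C * (n:ℝ) ^ ((1:ℝ) - κ) := hone
end
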